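/- Let W be a standard one-dimensional Brownian motion on a probability space (Ω, 𝓕, ℙ). Then 1 − E[ cos( h · exp( (x + W(t))³ ) ) ] ≥ exp( −(8/t) · ( |ln(π/(2h))|^{2/3} + x² ) ) for every t ∈ (0,∞), every x ∈ ℝ and every h ∈ (0, (π/2)·exp( −(max(√t + x, 0))³ )]. -/

import Mathlib

open MeasureTheory ProbabilityTheory
open scoped ENNReal

/-- A standard one-dimensional Brownian motion on a probability space `(Ω, 𝓕, P)`:
a stochastic process `W : [0,∞) × Ω → ℝ` (modelled as `W : ℝ → Ω → ℝ`, relevant only for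
nonnegative times) with `W 0 = 0`, P-almost surely continuous sample paths,
independent increments, and `W t - W s` normally distributed with mean `0` and
variance `t - s` for all `0 ≤ s ≤ t`. -/
structure IsStandardBrownianMotion {Ω : Type*} [MeasurableSpace Ω] (P : Measure Ω)
    (W : ℝ → Ω → ℝ) : Prop where
  isProbabilityMeasure : IsProbabilityMeasure P
  measurable : ∀ t : ℝ, Measurable (W t)
  start : ∀ ω, W 0 ω = 0
  ae_continuous : ∀ᵐ ω ∂P, ContinuousOn (fun t => W t ω) (Set.Ici 0)
  indep_increments : ∀ (n : ℕ) (t : Fin (n + 1) → ℝ), (∀ i, 0 ≤ t i) → Monotone t →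
    iIndepFun (m := fun _ => Real.measurableSpace)
      (fun (i : Fin n) (ω : Ω) => W (t i.succ) ω - W (t i.castSucc) ω) P
  gauss_increments : ∀ s t : ℝ, 0 ≤ s → s ≤ t →
    P.map (fun ω => W t ω - W s ω) = gaussianReal 0 (Real.toNNReal (t - s))


open Real
open Set Filter Function
open scoped NNReal

/-! The law of `x + W t` is `N(x, t)`. With `L = log (π / (2 h))`, the points
`z_m = (L + log (2 m + 1)) ^ (1/3)` solve `h * exp (z ^ 3) = (2 m + 1) π / 2`, so the cosine is
nonpositive on every `[z_{2k}, z_{2k+1})` and `1 - E cos (…)` is at least the Gaussian mass of their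
union `U`. As `m ↦ z_m` is concave and the density decreases to the right of the mean `x ≤ z_0`,
each interval `[z_{2k+1}, z_{2k+2})` carries less mass than the one before it, whence
`N(x, t) U ≥ N(x, t) [z_0, ∞) / 2`; finally `N(x, t) [z_0, ∞)` is at least `√t` times the density
at `z_0 + √t`, and `z_0 ^ 2 = |L| ^ (2/3)`. -/

lemma measureReal_le_one_sub_integral {α : Type*} [MeasurableSpace α] {μ : Measure α}
    [IsProbabilityMeasure μ] {f : α → ℝ} {U : Set α} (hf : Integrable f μ) (hf1 : ∀ y, f y ≤ 1)
    (hU : MeasurableSet U) (hfU : ∀ y ∈ U, f y ≤ 0) : μ.real U ≤ 1 - ∫ y, f y ∂μ := by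
  calc μ.real U = ∫ y, U.indicator 1 y ∂μ := (integral_indicator_one hU).symm
    _ ≤ ∫ y, (1 - f y) ∂μ := by
        refine integral_mono ((integrable_const 1).indicator hU) ((integrable_const 1).sub hf)
          fun y => ?_
        by_cases hy : y ∈ U
        · simp [indicator_of_mem hy, hfU y hy]
        · simp [indicator_of_notMem hy, hf1 y]
    _ = 1 - ∫ y, f y ∂μ := by simp [integral_sub (integrable_const 1) hf]

lemma measure_Ici_le_two_mul_measure_iUnion_Ico_even {ν : Measure ℝ} {s : ℕ → ℝ}
    (hs : Monotone s) (hs_top : ¬BddAbove (range s))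
    (hodd : ∀ k, ν (Ico (s (2 * k + 1)) (s (2 * k + 2))) ≤ ν (Ico (s (2 * k)) (s (2 * k + 1)))) :
    ν (Ici (s 0)) ≤ 2 * ν (⋃ k, Ico (s (2 * k)) (s (2 * k + 1))) := by
  have hdisj : Pairwise (Disjoint on fun m => Ico (s m) (s (m + 1))) := by
    simpa using hs.pairwise_disjoint_on_Ico_succ
  have hcover : ⋃ m, Ico (s m) (s (m + 1)) = Ici (s 0) := by
    simpa using iUnion_Ico_map_succ_eq_Ici (fun m => hs (Nat.zero_le m)) hs_top
  have heven :
      ν (⋃ k, Ico (s (2 * k)) (s (2 * k + 1))) = ∑' k, ν (Ico (s (2 * k)) (s (2 * k + 1))) :=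
    measure_iUnion (hdisj.comp_of_injective fun _ _ h => by simpa using h)
      fun _ => measurableSet_Ico
  rw [← hcover, measure_iUnion hdisj fun _ => measurableSet_Ico,
    ← tsum_even_add_odd ENNReal.summable ENNReal.summable, heven, two_mul]
  exact add_le_add le_rfl (ENNReal.tsum_le_tsum hodd)

lemma gaussianPDFReal_antitoneOn (μ : ℝ) (v : ℝ≥0) : AntitoneOn (gaussianPDFReal μ v) (Ici μ) := by
  intro a ha b _ hab
  simp only [gaussianPDFReal]
  gcongr
  exact sub_nonneg.2 ha

lemma ofReal_mul_gaussianPDFReal_le_gaussianReal_Ico {μ : ℝ} {v : ℝ≥0} (hv : v ≠ 0) {a b : ℝ}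
    (ha : μ ≤ a) :
    ENNReal.ofReal ((b - a) * gaussianPDFReal μ v b) ≤ gaussianReal μ v (Ico a b) := by
  rw [gaussianReal_apply μ hv, mul_comm, ENNReal.ofReal_mul (gaussianPDFReal_nonneg _ _ _),
    ← Real.volume_Ico, ← setLIntegral_const]
  refine setLIntegral_mono (measurable_gaussianPDF _ _) fun y hy => ?_
  exact ENNReal.ofReal_le_ofReal <| gaussianPDFReal_antitoneOn μ v (ha.trans hy.1)
    (ha.trans (hy.1.trans hy.2.le)) hy.2.le

lemma gaussianReal_Ico_le_ofReal_mul_gaussianPDFReal {μ : ℝ} {v : ℝ≥0} (hv : v ≠ 0) {a b : ℝ}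
    (ha : μ ≤ a) :
    gaussianReal μ v (Ico a b) ≤ ENNReal.ofReal ((b - a) * gaussianPDFReal μ v a) := by
  rw [gaussianReal_apply μ hv, mul_comm, ENNReal.ofReal_mul (gaussianPDFReal_nonneg _ _ _),
    ← Real.volume_Ico, ← setLIntegral_const]
  refine setLIntegral_mono measurable_const fun y hy => ?_
  exact ENNReal.ofReal_le_ofReal (gaussianPDFReal_antitoneOn μ v ha (ha.trans hy.1) hy.1)

lemma gaussianReal_Ico_succ_le_of_concave {μ : ℝ} {v : ℝ≥0} (hv : v ≠ 0) {s : ℕ → ℝ}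
    (hs : Monotone s) (hμ : μ ≤ s 0) (hconc : ∀ m, s (m + 2) - s (m + 1) ≤ s (m + 1) - s m)
    (m : ℕ) :
    gaussianReal μ v (Ico (s (m + 1)) (s (m + 2))) ≤ gaussianReal μ v (Ico (s m) (s (m + 1))) := by
  have hμs : ∀ n, μ ≤ s n := fun n => hμ.trans (hs (Nat.zero_le n))
  calc gaussianReal μ v (Ico (s (m + 1)) (s (m + 2)))
      ≤ ENNReal.ofReal ((s (m + 2) - s (m + 1)) * gaussianPDFReal μ v (s (m + 1))) :=
        gaussianReal_Ico_le_ofReal_mul_gaussianPDFReal hv (hμs _)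
    _ ≤ ENNReal.ofReal ((s (m + 1) - s m) * gaussianPDFReal μ v (s (m + 1))) :=
        ENNReal.ofReal_le_ofReal
          (mul_le_mul_of_nonneg_right (hconc m) (gaussianPDFReal_nonneg _ _ _))
    _ ≤ gaussianReal μ v (Ico (s m) (s (m + 1))) :=
        ofReal_mul_gaussianPDFReal_le_gaussianReal_Ico hv (hμs _)

lemma two_mul_sqrt_two_pi_le_exp_two : 2 * √(2 * π) ≤ exp 2 := by
  have hsqrt : √(2 * π) ≤ 7 / 2 := (sqrt_le_left (by norm_num)).2 (by linarith [pi_lt_d2])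
  have he : exp 2 = exp 1 ^ 2 := by rw [← exp_nat_mul]; norm_num
  nlinarith [exp_one_gt_d9]

lemma sqrt_mul_gaussianPDFReal_add_sqrt {t : ℝ} (ht : 0 < t) (x p : ℝ) :
    √t * gaussianPDFReal x t.toNNReal (p + √t) =
      (√(2 * π))⁻¹ * exp (-(p - x + √t) ^ 2 / (2 * t)) := by
  have hsqrt : √t ≠ 0 := (sqrt_pos.2 ht).ne'
  rw [gaussianPDFReal, Real.coe_toNNReal t ht.le, sqrt_mul (by positivity)]
  field_simp
  ring_nf

lemma two_mul_exp_le_sqrt_mul_gaussianPDFReal {t x p : ℝ} (ht : 0 < t) (hp : √t + x ≤ p) :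
    2 * exp (-(8 / t) * (p ^ 2 + x ^ 2)) ≤ √t * gaussianPDFReal x t.toNNReal (p + √t) := by
  set u := (p - x) ^ 2 / t with hu
  have hsq : √t ^ 2 = t := sq_sqrt ht.le
  have hu1 : 1 ≤ u := by
    rw [hu, le_div_iff₀ ht, one_mul, ← hsq]
    exact pow_le_pow_left₀ (sqrt_nonneg t) (by linarith) 2
  have hexp_arg : -(u + 1) ≤ -(p - x + √t) ^ 2 / (2 * t) := by
    rw [hu, neg_div, neg_le_neg_iff, div_le_iff₀ (by positivity)]
    field_simp
    nlinarith [sq_nonneg (p - x - √t)]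
  have h8 : 4 * u ≤ 8 / t * (p ^ 2 + x ^ 2) := by
    rw [hu, mul_div_assoc', div_mul_eq_mul_div, div_le_div_iff_of_pos_right ht]
    nlinarith [sq_nonneg (p + x)]
  rw [sqrt_mul_gaussianPDFReal_add_sqrt ht]
  calc 2 * exp (-(8 / t) * (p ^ 2 + x ^ 2))
      ≤ (√(2 * π))⁻¹ * (2 * √(2 * π) * exp (-(4 * u))) := by
        rw [show (√(2 * π))⁻¹ * (2 * √(2 * π) * exp (-(4 * u))) = 2 * exp (-(4 * u)) by
          field_simp]
        gcongr
        linarith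
    _ ≤ (√(2 * π))⁻¹ * (exp (3 * u - 1) * exp (-(4 * u))) := by
        gcongr
        exact two_mul_sqrt_two_pi_le_exp_two.trans (exp_le_exp.2 (by linarith))
    _ = (√(2 * π))⁻¹ * exp (-(u + 1)) := by rw [← exp_add]; ring_nf
    _ ≤ (√(2 * π))⁻¹ * exp (-(p - x + √t) ^ 2 / (2 * t)) := by gcongr

lemma two_mul_exp_le_gaussianReal_Ici {t x p : ℝ} (ht : 0 < t) (hp : √t + x ≤ p) :
    ENNReal.ofReal (2 * exp (-(8 / t) * (p ^ 2 + x ^ 2))) ≤ gaussianReal x t.toNNReal (Ici p) :=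
  calc ENNReal.ofReal (2 * exp (-(8 / t) * (p ^ 2 + x ^ 2)))
      ≤ ENNReal.ofReal ((p + √t - p) * gaussianPDFReal x t.toNNReal (p + √t)) := by
        rw [add_sub_cancel_left]
        exact ENNReal.ofReal_le_ofReal (two_mul_exp_le_sqrt_mul_gaussianPDFReal ht hp)
    _ ≤ gaussianReal x t.toNNReal (Ico p (p + √t)) :=
        ofReal_mul_gaussianPDFReal_le_gaussianReal_Ico (Real.toNNReal_pos.2 ht).ne'
          (by linarith [sqrt_nonneg t])
    _ ≤ gaussianReal x t.toNNReal (Ici p) := measure_mono Ico_subset_Ici_self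

lemma add_le_two_mul_of_pow_three_add_pow_three_le {a b c : ℝ} (ha : 0 ≤ a) (hc : 0 ≤ c)
    (h : a ^ 3 + c ^ 3 ≤ 2 * b ^ 3) : a + c ≤ 2 * b := by
  have hb : 0 ≤ b := by
    by_contra! hb
    nlinarith [pow_nonneg ha 3, pow_nonneg hc 3, pow_pos (neg_pos.2 hb) 3]
  refine le_of_pow_le_pow_left₀ (n := 3) (by norm_num) (by positivity) ?_
  nlinarith [mul_nonneg (add_nonneg ha hc) (sq_nonneg (a - c))]

lemma cos_nonpos_of_mem_Icc (k : ℕ) {θ : ℝ}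
    (hθ : θ ∈ Icc ((4 * k + 1) * (π / 2)) ((4 * k + 3) * (π / 2))) : cos θ ≤ 0 := by
  rw [← cos_sub_nat_mul_two_pi θ k]
  apply cos_nonpos_of_pi_div_two_le_of_le <;> linarith [hθ.1, hθ.2]

/-- For `exp L = π / (2 * h)`, the points `cosNode L m` are the zeros of `z ↦ cos (h * exp (z ^ 3))`
on `[L ^ (1/3), ∞)`. -/
noncomputable def cosNode (L : ℝ) (m : ℕ) : ℝ := (L + log (2 * m + 1)) ^ (3⁻¹ : ℝ)

section cosNode

variable {L : ℝ}

lemma log_two_mul_add_one_nonneg (m : ℕ) : 0 ≤ log (2 * m + 1 : ℝ) :=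
  log_nonneg (by linarith [(Nat.cast_nonneg m : (0 : ℝ) ≤ m)])

lemma cosNode_pow_three (hL : 0 ≤ L) (m : ℕ) : cosNode L m ^ 3 = L + log (2 * m + 1) := by
  simpa [cosNode] using
    rpow_inv_natCast_pow (add_nonneg hL (log_two_mul_add_one_nonneg m)) three_ne_zero

lemma cosNode_zero : cosNode L 0 = L ^ (3⁻¹ : ℝ) := by simp [cosNode]

lemma cosNode_nonneg (hL : 0 ≤ L) (m : ℕ) : 0 ≤ cosNode L m :=
  rpow_nonneg (add_nonneg hL (log_two_mul_add_one_nonneg m)) _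

lemma cosNode_monotone (hL : 0 ≤ L) : Monotone (cosNode L) := by
  intro m n hmn
  apply rpow_le_rpow (add_nonneg hL (log_two_mul_add_one_nonneg m)) _ (by norm_num)
  gcongr

lemma tendsto_cosNode_atTop : Tendsto (cosNode L) atTop atTop :=
  (tendsto_rpow_atTop (by norm_num)).comp <| tendsto_atTop_add_const_left _ L <|
    tendsto_log_atTop.comp <| tendsto_atTop_add_const_right _ 1 <|
      tendsto_natCast_atTop_atTop.const_mul_atTop two_pos

lemma cosNode_concave (hL : 0 ≤ L) (m : ℕ) :
    cosNode L (m + 2) - cosNode L (m + 1) ≤ cosNode L (m + 1) - cosNode L m := by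
  have hlog : log (2 * m + 1 : ℝ) + log (2 * (m + 2 : ℕ) + 1) ≤ 2 * log (2 * (m + 1 : ℕ) + 1) := by
    rw [← log_mul (by positivity) (by positivity), two_mul (log _),
      ← log_mul (by positivity) (by positivity)]
    apply log_le_log (by positivity)
    push_cast
    nlinarith
  have := add_le_two_mul_of_pow_three_add_pow_three_le (cosNode_nonneg hL m)
    (cosNode_nonneg hL (m + 2)) (b := cosNode L (m + 1))
    (by rw [cosNode_pow_three hL, cosNode_pow_three hL, cosNode_pow_three hL]; linarith)
  linarith

lemma cos_mul_exp_cosNode_pow_three_nonpos {h : ℝ} (hh : 0 ≤ h) (hL : 0 ≤ L)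
    (hLh : h * exp L = π / 2) (k : ℕ) {z : ℝ}
    (hz : z ∈ Ico (cosNode L (2 * k)) (cosNode L (2 * k + 1))) :
    cos (h * exp (z ^ 3)) ≤ 0 := by
  have hnode : ∀ m : ℕ, h * exp (cosNode L m ^ 3) = (2 * m + 1) * (π / 2) := fun m => by
    rw [cosNode_pow_three hL, exp_add, exp_log (by positivity), ← mul_assoc, hLh, mul_comm]
  have hnode0 := cosNode_nonneg hL (2 * k)
  have hz0 : 0 ≤ z := hnode0.trans hz.1
  apply cos_nonpos_of_mem_Icc k
  constructor
  · calc (4 * k + 1 : ℝ) * (π / 2) = h * exp (cosNode L (2 * k) ^ 3) := by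
          rw [hnode]; push_cast; ring
      _ ≤ h * exp (z ^ 3) := by gcongr; exact hz.1
  · calc h * exp (z ^ 3) ≤ h * exp (cosNode L (2 * k + 1) ^ 3) := by gcongr; exact hz.2.le
      _ = (4 * k + 3 : ℝ) * (π / 2) := by rw [hnode]; push_cast; ring

lemma le_cosNode_zero {a : ℝ} (ha : 0 ≤ a) (haL : a ^ 3 ≤ L) : a ≤ cosNode L 0 := by
  have hL : 0 ≤ L := (pow_nonneg ha 3).trans haL
  refine le_of_pow_le_pow_left₀ three_ne_zero (cosNode_nonneg hL 0) ?_
  simpa [cosNode_pow_three hL] using haL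

lemma abs_rpow_two_thirds_eq_cosNode_zero_sq (hL : 0 ≤ L) :
    |L| ^ ((2 : ℝ) / 3) = cosNode L 0 ^ 2 := by
  rw [abs_of_nonneg hL, cosNode_zero, ← rpow_natCast, ← rpow_mul hL]
  norm_num

end cosNode

lemma ofReal_exp_le_gaussianReal_iUnion_cosNode {t x L : ℝ} (ht : 0 < t) (hL : 0 ≤ L)
    (hnode : √t + x ≤ cosNode L 0) :
    ENNReal.ofReal (exp (-(8 / t) * (cosNode L 0 ^ 2 + x ^ 2))) ≤
      gaussianReal x t.toNNReal (⋃ k : ℕ, Ico (cosNode L (2 * k)) (cosNode L (2 * k + 1))) := by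
  have hmean : x ≤ cosNode L 0 := hnode.trans' (by linarith [sqrt_nonneg t])
  have hhalf := (two_mul_exp_le_gaussianReal_Ici ht hnode).trans
    (measure_Ici_le_two_mul_measure_iUnion_Ico_even (cosNode_monotone hL)
      (not_bddAbove_of_tendsto_atTop tendsto_cosNode_atTop)
      fun k => gaussianReal_Ico_succ_le_of_concave (Real.toNNReal_pos.2 ht).ne'
        (cosNode_monotone hL) hmean (cosNode_concave hL) (2 * k))
  rwa [ENNReal.ofReal_mul zero_le_two, ENNReal.ofReal_ofNat,
    ENNReal.mul_le_mul_iff_right two_ne_zero ENNReal.ofNat_ne_top] at hhalf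

lemma le_log_div_of_le_mul_exp_neg {c h y : ℝ} (hh : 0 < h) (hle : h ≤ c * exp (-y)) :
    y ≤ log (c / h) := by
  have hc : 0 < c := pos_of_mul_pos_left (hh.trans_le hle) (exp_pos _).le
  rw [le_log_iff_exp_le (by positivity), le_div_iff₀ hh]
  calc exp y * h ≤ exp y * (c * exp (-y)) := by gcongr
    _ = c := by rw [mul_left_comm, ← exp_add, add_neg_cancel, exp_zero, mul_one]

lemma IsStandardBrownianMotion.map_const_add {Ω : Type*} [MeasurableSpace Ω] {P : Measure Ω}
    {W : ℝ → Ω → ℝ} (hW : IsStandardBrownianMotion P W) {t : ℝ} (ht : 0 ≤ t) (x : ℝ) :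
    P.map (fun ω => x + W t ω) = gaussianReal x t.toNNReal := by
  have hlaw : P.map (W t) = gaussianReal 0 t.toNNReal := by
    simpa [hW.start] using hW.gauss_increments 0 t le_rfl ht
  change P.map ((x + ·) ∘ W t) = _
  rw [← Measure.map_map (measurable_const_add x) (hW.measurable t), hlaw,
    gaussianReal_map_const_add, zero_add]

lemma IsStandardBrownianMotion.integral_comp_const_add {Ω : Type*} [MeasurableSpace Ω]
    {P : Measure Ω} {W : ℝ → Ω → ℝ} (hW : IsStandardBrownianMotion P W) {t : ℝ} (ht : 0 ≤ t)
    (x : ℝ) {f : ℝ → ℝ} (hf : AEStronglyMeasurable f (gaussianReal x t.toNNReal)) :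
    ∫ ω, f (x + W t ω) ∂P = ∫ z, f z ∂gaussianReal x t.toNNReal := by
  rw [← hW.map_const_add ht x] at hf ⊢
  exact (integral_map ((hW.measurable t).const_add x).aemeasurable hf).symm

/-- first lower bound of Lemma 3.3: for every `t ∈ (0,∞)`, `x ∈ ℝ`
and `h ∈ (0, (π/2)·exp(−(max(√t + x, 0))³)]`,
`1 − E[cos(h·exp((x + W t)³))] ≥ exp(−(8/t)·(|ln(π/(2h))|^{2/3} + x²))`. -/
theorem one_sub_expectation_cos_ge
    {Ω : Type*} [MeasurableSpace Ω] (P : Measure Ω) (W : ℝ → Ω → ℝ)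
    (hW : IsStandardBrownianMotion P W)
    (t x h : ℝ) (ht : 0 < t) (hh : 0 < h)
    (hh' : h ≤ (π / 2) * Real.exp (-(max (Real.sqrt t + x) 0) ^ 3)) :
    1 - ∫ ω, Real.cos (h * Real.exp ((x + W t ω) ^ 3)) ∂P ≥
      Real.exp (-(8 / t) * (|Real.log (π / (2 * h))| ^ ((2:ℝ)/3) + x ^ 2)) := by
  have := hW.isProbabilityMeasure
  set L := log (π / (2 * h))
  have hLh : h * exp L = π / 2 := by
    rw [exp_log (by positivity)]
    field_simp
  have hML : max (√t + x) 0 ^ 3 ≤ L := by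
    simpa [div_div] using le_log_div_of_le_mul_exp_neg hh hh'
  have hL : 0 ≤ L := (pow_nonneg (le_max_right _ _) 3).trans hML
  have hnode : √t + x ≤ cosNode L 0 :=
    (le_max_left _ _).trans (le_cosNode_zero (le_max_right _ _) hML)
  have hcont : Continuous fun z : ℝ => cos (h * exp (z ^ 3)) := by fun_prop
  rw [ge_iff_le, abs_rpow_two_thirds_eq_cosNode_zero_sq hL,
    hW.integral_comp_const_add ht.le x (f := fun z => cos (h * exp (z ^ 3)))
      hcont.aestronglyMeasurable]
  calc exp (-(8 / t) * (cosNode L 0 ^ 2 + x ^ 2))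
      ≤ (gaussianReal x t.toNNReal).real
          (⋃ k : ℕ, Ico (cosNode L (2 * k)) (cosNode L (2 * k + 1))) :=
        (ENNReal.ofReal_le_iff_le_toReal (measure_ne_top _ _)).1
          (ofReal_exp_le_gaussianReal_iUnion_cosNode ht hL hnode)
    _ ≤ 1 - ∫ z, cos (h * exp (z ^ 3)) ∂gaussianReal x t.toNNReal :=
        measureReal_le_one_sub_integral
          (.of_bound hcont.aestronglyMeasurable 1 (.of_forall fun _ => abs_cos_le_one _))
          (fun _ => cos_le_one _) (.iUnion fun _ => measurableSet_Ico) fun z hz => by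
            obtain ⟨k, hk⟩ := mem_iUnion.1 hz
            exact cos_mul_exp_cosNode_pow_three_nonpos hh.le hL hLh k hk
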